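/- arXiv:2101.06453 — 8 statements merged into one kernel-verified Lean document; each statement's English description precedes it below -/
import Mathlib

section
/- Let φ: ℝ^d → ℝ be a differentiable function whose gradient is Lipschitz continuous with constant L (i.e., φ is L-smooth). Then for every z ∈ ℝ^d and every y ∈ [-1/2, 1/2]^d, one has exp(φ(z) − φ(z+y)) · (1 + exp(2⟨y, ∇φ(z)⟩)) / 2 ≥ exp(−dL/8). -/
open Real MeasureTheory
open scoped RealInnerProductSpace

/-- `L`-smoothness bound for the sigmoidal approximation: if `φ : ℝ^d → ℝ` is differentiable
with `L`-Lipschitz gradient, then for every `z` and every `y ∈ [-1/2, 1/2]^d`,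
`exp(φ(z) − φ(z+y)) · (1 + exp(2⟨y, ∇φ(z)⟩)) / 2 ≥ exp(−dL/8)`. -/
theorem stmt0 {d : ℕ} (hd : 1 ≤ d) (L : ℝ) (φ : EuclideanSpace ℝ (Fin d) → ℝ)
    (hdiff : Differentiable ℝ φ)
    (hLip : ∀ x y : EuclideanSpace ℝ (Fin d),
      ‖gradient φ x - gradient φ y‖ ≤ L * ‖x - y‖)
    (z y : EuclideanSpace ℝ (Fin d))
    (hy : ∀ i, y i ∈ Set.Icc (-(1/2) : ℝ) (1/2)) :
    Real.exp (φ z - φ (z + y)) * (1 + Real.exp (2 * ⟪y, gradient φ z⟫)) / 2 ≥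
      Real.exp (-(d * L) / 8) := by
  -- L ≥ 0
  have hL0 : 0 ≤ L := by
    have h := hLip (EuclideanSpace.single (⟨0, hd⟩ : Fin d) (1:ℝ))
      (0 : EuclideanSpace ℝ (Fin d))
    have hn : ‖(EuclideanSpace.single (⟨0, hd⟩ : Fin d) (1:ℝ)) - 0‖ = 1 := by
      simp
    rw [hn, mul_one] at h
    exact le_trans (norm_nonneg _) h
  -- ‖y‖² ≤ d/4
  have hy2 : ‖y‖^2 ≤ (d:ℝ)/4 := by
    rw [EuclideanSpace.norm_eq]
    rw [Real.sq_sqrt (by positivity)]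
    calc ∑ i, ‖y i‖^2 ≤ ∑ _i : Fin d, (1/4 : ℝ) := by
          apply Finset.sum_le_sum
          intro i _
          have := hy i
          rw [Real.norm_eq_abs]
          nlinarith [this.1, this.2, sq_abs (y i)]
      _ = (d:ℝ)/4 := by simp; ring
  -- descent lemma
  set g := gradient φ with hg
  have descent : φ (z + y) ≤ φ z + ⟪y, g z⟫ + L * ‖y‖^2 / 2 := by
    set h : ℝ → ℝ := fun t => φ (z + t • y) - t * ⟪y, g z⟫ - L * ‖y‖^2 * t^2 / 2 with hh
    have hc : ∀ t : ℝ, HasDerivAt (fun s : ℝ => z + s • y) y t := by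
      intro t
      simpa using ((hasDerivAt_id t).smul_const y).const_add z
    have hd' : ∀ t : ℝ, HasDerivAt h (⟪y, g (z + t • y)⟫ - ⟪y, g z⟫ - L * ‖y‖^2 * t) t := by
      intro t
      have h1 : HasDerivAt (fun s : ℝ => φ (z + s • y)) ⟪y, g (z + t • y)⟫ t := by
        have hf := (hdiff (z + t • y)).hasGradientAt.hasFDerivAt
        have hcomp := hf.comp_hasDerivAt t (hc t)
        have he : (InnerProductSpace.toDual ℝ _ (g (z + t • y))) y
            = ⟪y, g (z + t • y)⟫ := by
          rw [InnerProductSpace.toDual_apply_apply, real_inner_comm]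
        rw [he] at hcomp
        exact hcomp
      have h2 : HasDerivAt (fun s : ℝ => s * ⟪y, g z⟫) ⟪y, g z⟫ t := by
        simpa using (hasDerivAt_id t).mul_const ⟪y, g z⟫
      have h3 : HasDerivAt (fun s : ℝ => L * ‖y‖^2 * s^2 / 2) (L * ‖y‖^2 * t) t := by
        have : HasDerivAt (fun s : ℝ => s^2) (2*t) t := by
          simpa using hasDerivAt_pow 2 t
        convert ((this.const_mul (L * ‖y‖^2)).div_const 2) using 1
        · rfl
        · rfl
        ring
      exact (h1.sub h2).sub h3
    have hanti : AntitoneOn h (Set.Icc 0 1) := by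
      apply antitoneOn_of_deriv_nonpos (convex_Icc 0 1)
      · exact fun t _ => ((hd' t).continuousAt).continuousWithinAt
      · exact fun t _ => ((hd' t).differentiableAt).differentiableWithinAt
      · intro t ht
        rw [interior_Icc] at ht
        rw [(hd' t).deriv]
        have hinner : ⟪y, g (z + t • y) - g z⟫ ≤ ‖y‖ * ‖g (z + t • y) - g z‖ :=
          real_inner_le_norm _ _
        have hlip : ‖g (z + t • y) - g z‖ ≤ L * (t * ‖y‖) := by
          have := hLip (z + t • y) z
          simpa [norm_smul, abs_of_pos ht.1, mul_assoc] using this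
        have : ⟪y, g (z + t • y)⟫ - ⟪y, g z⟫ = ⟪y, g (z + t • y) - g z⟫ := by
          rw [inner_sub_right]
        rw [this]
        nlinarith [norm_nonneg y, ht.1.le]
    have := hanti (Set.left_mem_Icc.2 zero_le_one) (Set.right_mem_Icc.2 zero_le_one) zero_le_one
    simp only [hh, one_smul, zero_smul, add_zero, one_pow, mul_one, one_mul, zero_pow,
      mul_zero, zero_mul, sub_zero, zero_div] at this
    linarith
  -- final
  set t := ⟪y, g z⟫
  have hkey : φ z - φ (z + y) ≥ -t - (d:ℝ) * L / 8 := by nlinarith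
  have h1 : Real.exp (φ z - φ (z + y)) ≥ Real.exp (-t - (d:ℝ)*L/8) := Real.exp_le_exp.2 hkey
  have h2 : Real.exp (-t - (d:ℝ)*L/8) * (1 + Real.exp (2*t)) / 2 ≥ Real.exp (-((d:ℝ)*L)/8) := by
    rw [show -t - (d:ℝ)*L/8 = -((d:ℝ)*L)/8 + -t by ring, Real.exp_add]
    have h3 : Real.exp (-t) * (1 + Real.exp (2*t)) ≥ 2 := by
      have e1 : Real.exp (-t) * Real.exp (2*t) = Real.exp t := by
        rw [← Real.exp_add]; ring_nf
      have e2 : Real.exp (-t) * Real.exp t = 1 := by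
        rw [← Real.exp_add]; simp
      nlinarith [Real.exp_pos (-t), Real.exp_pos t, sq_nonneg (Real.exp t - 1), e2]
    nlinarith [Real.exp_pos (-((d:ℝ)*L)/8)]
  calc Real.exp (φ z - φ (z + y)) * (1 + Real.exp (2 * t)) / 2
      ≥ Real.exp (-t - (d:ℝ)*L/8) * (1 + Real.exp (2*t)) / 2 := by
        have := Real.exp_pos (2*t)
        gcongr
    _ ≥ Real.exp (-((d:ℝ)*L)/8) := h2
end

section
/- (Proposition 1) Let φ: ℝ^d → ℝ be L-smooth, let K = ∫_{ℝ^d} e^{−φ(x)} dx and Z = ∑_{z∈ℤ^d} e^{−φ(z)}, and assume 0 < K < ∞ and 0 < Z < ∞. Define the proposal density π(x) = e^{−φ(x)}/K and the target density π̄(x) = (1/Z) · 2e^{−φ([x])} / (1 + exp(2⟨x − [x], ∇φ([x])⟩)), where [x] is the coordinate-wise rounding of x to the nearest integer point. Then for every x ∈ ℝ^d, π(x) ≥ (Z/K) · exp(−dL/8) · π̄(x), and (Z/K) · exp(−dL/8) > 0. -/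
/-!
At the lattice point `[x]` the descent lemma for an `L`-smooth `φ`, with increment `x - [x]`
(every coordinate of which is at most `1/2` in absolute value, so `‖x - [x]‖² ≤ d/4`), gives
`φ x ≤ φ [x] + s + dL/8` with `s = ⟪x - [x], ∇φ [x]⟫`. Since `1 + e^{2s} = 2 e^s cosh s ≥ 2 e^s`,
the logistic factor `2 / (1 + e^{2s})` is at most `e^{-s}`, and the two bounds combine to
`e^{-dL/8} · 2 e^{-φ [x]} / (1 + e^{2s}) ≤ e^{-φ x}`.
-/

open Real MeasureTheory
open scoped RealInnerProductSpace

/-- Coordinate-wise rounding of a vector in `ℝ^d` to the nearest integer point. -/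
noncomputable def roundVec {d : ℕ} (x : EuclideanSpace ℝ (Fin d)) :
    EuclideanSpace ℝ (Fin d) :=
  WithLp.toLp 2 (fun i => (round (x i) : ℝ))

theorem nonneg_of_norm_sub_le_mul_norm_sub {E F : Type*} [NormedAddCommGroup E] [Nontrivial E]
    [SeminormedAddCommGroup F] {f : E → F} {L : ℝ} (hf : ∀ x y, ‖f x - f y‖ ≤ L * ‖x - y‖) : 0 ≤ L := by
  obtain ⟨x, hx⟩ := exists_ne (0 : E)
  exact nonneg_of_mul_nonneg_left ((norm_nonneg _).trans (hf x 0)) (by simpa using hx)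

section Smooth

variable {E : Type*} [NormedAddCommGroup E] [InnerProductSpace ℝ E] [CompleteSpace E]
  {φ : E → ℝ}

theorem hasDerivAt_comp_add_smul (hφ : Differentiable ℝ φ) (y u : E) (t : ℝ) :
    HasDerivAt (fun t : ℝ => φ (y + t • u)) ⟪gradient φ (y + t • u), u⟫ t := by
  have hline : HasDerivAt (fun t : ℝ => y + t • u) u t := by
    simpa using ((hasDerivAt_id t).smul_const u).const_add y
  have h := (hφ _).hasGradientAt.hasFDerivAt.comp_hasDerivAt t hline
  rwa [InnerProductSpace.toDual_apply_apply] at h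

theorem le_add_inner_add_of_gradient_lipschitz {L : ℝ} (hφ : Differentiable ℝ φ)
    (hL : ∀ x y, ‖gradient φ x - gradient φ y‖ ≤ L * ‖x - y‖) (y u : E) :
    φ (y + u) ≤ φ y + ⟪gradient φ y, u⟫ + L / 2 * ‖u‖ ^ 2 := by
  set B : ℝ → ℝ := fun t => φ y + t * ⟪gradient φ y, u⟫ + L / 2 * ‖u‖ ^ 2 * t ^ 2
  have hB : ∀ t, HasDerivAt B (⟪gradient φ y, u⟫ + L * ‖u‖ ^ 2 * t) t := by
    intro t
    refine ((((hasDerivAt_id' t).mul_const ⟪gradient φ y, u⟫).const_add (φ y)).add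
      ((hasDerivAt_pow 2 t).const_mul (L / 2 * ‖u‖ ^ 2))).congr_deriv ?_
    push_cast; ring
  have hf := hasDerivAt_comp_add_smul hφ y u
  have bound : ∀ t ∈ Set.Ico (0 : ℝ) 1,
      ⟪gradient φ (y + t • u), u⟫ ≤ ⟪gradient φ y, u⟫ + L * ‖u‖ ^ 2 * t := by
    intro t ht
    have hlip : ‖gradient φ (y + t • u) - gradient φ y‖ ≤ L * (t * ‖u‖) := by
      simpa [norm_smul, abs_of_nonneg ht.1] using hL (y + t • u) y
    calc ⟪gradient φ (y + t • u), u⟫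
        = ⟪gradient φ y, u⟫ + ⟪gradient φ (y + t • u) - gradient φ y, u⟫ := by
          rw [inner_sub_left]; ring
      _ ≤ ⟪gradient φ y, u⟫ + ‖gradient φ (y + t • u) - gradient φ y‖ * ‖u‖ := by
          gcongr; exact real_inner_le_norm _ _
      _ ≤ ⟪gradient φ y, u⟫ + L * (t * ‖u‖) * ‖u‖ := by gcongr
      _ = ⟪gradient φ y, u⟫ + L * ‖u‖ ^ 2 * t := by ring
  have := image_le_of_deriv_right_le_deriv_boundary
    (fun t _ => (hf t).continuousAt.continuousWithinAt) (fun t _ => (hf t).hasDerivWithinAt)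
    (B := B) (by simp [B]) (fun t _ => (hB t).continuousAt.continuousWithinAt)
    (fun t _ => (hB t).hasDerivWithinAt) bound (Set.right_mem_Icc.2 zero_le_one)
  simpa [B] using this

end Smooth

theorem norm_sub_roundVec_sq_le {d : ℕ} (x : EuclideanSpace ℝ (Fin d)) :
    ‖x - roundVec x‖ ^ 2 ≤ d / 4 := by
  rw [EuclideanSpace.norm_sq_eq]
  calc ∑ i, ‖(x - roundVec x) i‖ ^ 2 ≤ ∑ _i : Fin d, (1 / 2 : ℝ) ^ 2 := by
        gcongr with i
        simpa [roundVec] using abs_sub_round (x i)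
    _ = d / 4 := by norm_num [div_eq_mul_inv, mul_comm]

theorem two_div_one_add_exp_two_mul_le (s : ℝ) : 2 / (1 + exp (2 * s)) ≤ exp (-s) := by
  have hcosh : exp (-s) * (1 + exp (2 * s)) = 2 * cosh s := by
    rw [cosh_eq, mul_add, ← exp_add]; ring_nf
  rw [div_le_iff₀ (by positivity), hcosh]
  linarith [one_le_cosh s]

theorem apply_le_apply_roundVec_add {d : ℕ} {L : ℝ} (hL₀ : 0 ≤ L)
    {φ : EuclideanSpace ℝ (Fin d) → ℝ} (hφ : Differentiable ℝ φ)
    (hL : ∀ x y, ‖gradient φ x - gradient φ y‖ ≤ L * ‖x - y‖) (x : EuclideanSpace ℝ (Fin d)) :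
    φ x ≤ φ (roundVec x) + ⟪x - roundVec x, gradient φ (roundVec x)⟫ + d * L / 8 := by
  have h := le_add_inner_add_of_gradient_lipschitz hφ hL (roundVec x) (x - roundVec x)
  rw [add_sub_cancel, real_inner_comm] at h
  have hquad : L / 2 * ‖x - roundVec x‖ ^ 2 ≤ L / 2 * (d / 4) := by
    gcongr; exact norm_sub_roundVec_sq_le x
  linarith

theorem stmt1_general {d : ℕ} (hd : 1 ≤ d) (L : ℝ) (φ : EuclideanSpace ℝ (Fin d) → ℝ)
    (hdiff : Differentiable ℝ φ)
    (hLip : ∀ x y : EuclideanSpace ℝ (Fin d),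
      ‖gradient φ x - gradient φ y‖ ≤ L * ‖x - y‖)
    (K Z : ℝ)
    (hKpos : 0 < K)
    (hZpos : 0 < Z)
    (p pb : EuclideanSpace ℝ (Fin d) → ℝ)
    (hp : ∀ x, p x = Real.exp (-φ x) / K)
    (hpb : ∀ x, pb x = (1 / Z) * (2 * Real.exp (-φ (roundVec x)) /
      (1 + Real.exp (2 * ⟪x - roundVec x, gradient φ (roundVec x)⟫)))) :
    (∀ x, p x ≥ (Z / K) * Real.exp (-(d * L) / 8) * pb x) ∧
      0 < (Z / K) * Real.exp (-(d * L) / 8) := by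
  have : Nonempty (Fin d) := ⟨⟨0, hd⟩⟩
  have hL₀ : 0 ≤ L := nonneg_of_norm_sub_le_mul_norm_sub hLip
  refine ⟨fun x => ?_, by positivity⟩
  set s := ⟪x - roundVec x, gradient φ (roundVec x)⟫
  have hφ : φ x ≤ φ (roundVec x) + s + d * L / 8 :=
    apply_le_apply_roundVec_add hL₀ hdiff hLip x
  have key : exp (-(d * L) / 8) * (2 * exp (-φ (roundVec x)) / (1 + exp (2 * s))) ≤ exp (-φ x) :=
    calc _ ≤ exp (-(d * L) / 8) * (exp (-φ (roundVec x)) * exp (-s)) := by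
          rw [mul_comm 2, mul_div_assoc]
          gcongr
          exact two_div_one_add_exp_two_mul_le s
      _ = exp (-(φ (roundVec x) + s + d * L / 8)) := by
          rw [← exp_add, ← exp_add]; ring_nf
      _ ≤ exp (-φ x) := by gcongr
  rw [hp, hpb, ge_iff_le]
  calc Z / K * exp (-(d * L) / 8) * (1 / Z * (2 * exp (-φ (roundVec x)) / (1 + exp (2 * s))))
      = exp (-(d * L) / 8) * (2 * exp (-φ (roundVec x)) / (1 + exp (2 * s))) / K := by
        field_simp
    _ ≤ exp (-φ x) / K := by gcongr

/-- Proposition 1: if `φ` is `L`-smooth, `π(x) = e^{−φ(x)}/K` and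
`π̄(x) = (1/Z)·2e^{−φ([x])}/(1 + exp(2⟨x−[x], ∇φ([x])⟩))`, then
`π(x) ≥ (Z/K)·e^{−dL/8}·π̄(x)` for all `x`, and `(Z/K)·e^{−dL/8} > 0`. -/
theorem stmt1 {d : ℕ} (hd : 1 ≤ d) (L : ℝ) (φ : EuclideanSpace ℝ (Fin d) → ℝ)
    (hdiff : Differentiable ℝ φ)
    (hLip : ∀ x y : EuclideanSpace ℝ (Fin d),
      ‖gradient φ x - gradient φ y‖ ≤ L * ‖x - y‖)
    (K Z : ℝ)
    (hK : K = ∫ x : EuclideanSpace ℝ (Fin d), Real.exp (-φ x))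
    (hKpos : 0 < K)
    (hZ : Z = ∑' z : Fin d → ℤ, Real.exp (-φ (WithLp.toLp 2 (fun i => (z i : ℝ)))))
    (hZpos : 0 < Z)
    (p pb : EuclideanSpace ℝ (Fin d) → ℝ)
    (hp : ∀ x, p x = Real.exp (-φ x) / K)
    (hpb : ∀ x, pb x = (1 / Z) * (2 * Real.exp (-φ (roundVec x)) /
      (1 + Real.exp (2 * ⟪x - roundVec x, gradient φ (roundVec x)⟫)))) :
    (∀ x, p x ≥ (Z / K) * Real.exp (-(d * L) / 8) * pb x) ∧
      0 < (Z / K) * Real.exp (-(d * L) / 8) :=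
  stmt1_general hd L φ hdiff hLip K Z hKpos hZpos p pb hp hpb
end

section
/- Let φ: ℝ^d → ℝ be differentiable, let Z = ∑_{z∈ℤ^d} e^{−φ(z)} be finite and positive, and define π̄(x) = (1/Z) · 2e^{−φ([x])} / (1 + exp(2⟨x − [x], ∇φ([x])⟩)), where [x] is the coordinate-wise rounding of x to the nearest integer point. Then for every z ∈ ℤ^d, the integral of π̄ over the unit hypercube z + [−1/2, 1/2]^d centered at z equals e^{−φ(z)}/Z. In other words, if X is a random vector with density π̄, then the coordinate-wise rounding [X] has distribution P_{ℤ^d}(z) = e^{−φ(z)}/Z. -/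
/-!
On the open cube `z + (-1/2, 1/2)^d` the rounding `[x]` is constantly `z`, so there
`π̄ x = (2 e^{-φ z} / Z) · σ(⟪x - z, -2 ∇φ(z)⟫)` with `σ` the logistic sigmoid. Since
`σ(-t) = 1 - σ(t)` and the point reflection `x ↦ 2z - x` preserves both the cube and Lebesgue
measure, the sigmoid factor averages to `1/2` over the cube, which has volume `1`. The faces of
the closed cube are null, so they do not change the integral.
-/

open Real MeasureTheory
open scoped RealInnerProductSpace

open Set

section Reflection

variable {G : Type*} [AddGroup G] [MeasurableSpace G] [MeasurableAdd G] [MeasurableNeg G]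
  {μ : Measure G} [μ.IsNegInvariant] [μ.IsAddLeftInvariant]

theorem setIntegral_eq_half_of_add_comp_sub_left_eq_one {S : Set G} {f : G → ℝ} (a : G)
    (hSm : MeasurableSet S) (hS : (a - ·) ⁻¹' S = S) (hf : IntegrableOn f S μ)
    (hsum : ∀ x, f x + f (a - x) = 1) :
    ∫ x in S, f x ∂μ = μ.real S / 2 := by
  have hpres := Measure.measurePreserving_sub_left μ a
  have hemb := (MeasurableEquiv.subLeft a).measurableEmbedding
  have hrefl : ∫ x in S, f (a - x) ∂μ = ∫ x in S, f x ∂μ := by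
    conv_lhs => rw [← hS]
    exact hpres.setIntegral_preimage_emb hemb f S
  have hf' : IntegrableOn (fun x => f (a - x)) S μ := by
    rw [← hS]
    exact (hpres.integrableOn_comp_preimage hemb).mpr hf
  have hadd := integral_add hf hf'
  rw [setIntegral_congr_fun hSm (fun x _ => hsum x), setIntegral_const, hrefl] at hadd
  simp only [smul_eq_mul, mul_one] at hadd
  linarith

end Reflection

section Sigmoid

variable {E : Type*} [NormedAddCommGroup E] [InnerProductSpace ℝ E] [MeasurableSpace E]
  [BorelSpace E] {μ : Measure E} [μ.IsNegInvariant] [μ.IsAddLeftInvariant]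

theorem setIntegral_sigmoid_inner_sub_eq_half {S : Set E} (c v : E) (hSm : MeasurableSet S)
    (hS : (c + c - ·) ⁻¹' S = S) (hSfin : μ S ≠ ⊤) :
    ∫ x in S, sigmoid ⟪x - c, v⟫ ∂μ = μ.real S / 2 := by
  have hcont : Continuous fun x : E => sigmoid ⟪x - c, v⟫ := by fun_prop
  refine setIntegral_eq_half_of_add_comp_sub_left_eq_one (c + c) hSm hS
    (Measure.integrableOn_of_bounded hSfin hcont.aestronglyMeasurable
      (M := 1) (ae_of_all _ fun x => ?_)) fun x => ?_
  · rw [norm_of_nonneg (sigmoid_nonneg _)]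
    exact sigmoid_le_one _
  · have : c + c - x - c = -(x - c) := by abel
    rw [this, inner_neg_left, sigmoid_neg]
    ring

end Sigmoid

section Cube

variable {ι : Type*}

theorem EuclideanSpace.setOf_forall_mem_eq_preimage_pi (s : ι → Set ℝ) :
    {x : EuclideanSpace ℝ ι | ∀ i, x i ∈ s i} = WithLp.ofLp ⁻¹' univ.pi s := by
  ext x
  simp

theorem EuclideanSpace.preimage_sub_setOf_forall_mem_Ioo (c : EuclideanSpace ℝ ι) (r : ℝ) :
    (c + c - ·) ⁻¹' {x : EuclideanSpace ℝ ι | ∀ i, x i ∈ Ioo (c i - r) (c i + r)} =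
      {x | ∀ i, x i ∈ Ioo (c i - r) (c i + r)} := by
  ext x
  simp only [mem_preimage, mem_ofPred_eq, mem_Ioo, PiLp.sub_apply, PiLp.add_apply]
  refine forall_congr' fun i => ?_
  constructor <;> rintro ⟨h₁, h₂⟩ <;> constructor <;> linarith

variable [Fintype ι]

theorem EuclideanSpace.setOf_forall_mem_Icc_ae_eq_Ioo (a b : ι → ℝ) :
    {x : EuclideanSpace ℝ ι | ∀ i, x i ∈ Icc (a i) (b i)} =ᵐ[volume]
      {x | ∀ i, x i ∈ Ioo (a i) (b i)} := by
  simp only [EuclideanSpace.setOf_forall_mem_eq_preimage_pi]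
  exact ((PiLp.volume_preserving_ofLp ι).quasiMeasurePreserving.preimage_ae_eq
    (Measure.pi_Ioo_ae_eq_pi_Icc (s := univ) (f := a) (g := b))).symm

theorem EuclideanSpace.volume_setOf_forall_mem_Ioo (a b : ι → ℝ) :
    volume {x : EuclideanSpace ℝ ι | ∀ i, x i ∈ Ioo (a i) (b i)} =
      ∏ i, ENNReal.ofReal (b i - a i) := by
  rw [← Real.volume_pi_Ioo, EuclideanSpace.setOf_forall_mem_eq_preimage_pi,
    (PiLp.volume_preserving_ofLp ι).measure_preimage
    (MeasurableSet.univ_pi fun i => measurableSet_Ioo).nullMeasurableSet]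

theorem EuclideanSpace.measurableSet_setOf_forall_mem_Ioo (a b : ι → ℝ) :
    MeasurableSet {x : EuclideanSpace ℝ ι | ∀ i, x i ∈ Ioo (a i) (b i)} := by
  rw [EuclideanSpace.setOf_forall_mem_eq_preimage_pi]
  exact (MeasurableSet.univ_pi fun _ => measurableSet_Ioo).preimage (WithLp.measurable_ofLp 2 _)

end Cube

theorem roundVec_eq_of_forall_mem_Ico {d : ℕ} {x : EuclideanSpace ℝ (Fin d)} {z : Fin d → ℤ}
    (hx : ∀ i, x i ∈ Ico ((z i : ℝ) - 1 / 2) ((z i : ℝ) + 1 / 2)) :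
    roundVec x = WithLp.toLp 2 (fun i => (z i : ℝ)) := by
  ext i
  simp only [roundVec, round_eq_iff.mpr (hx i)]

theorem stmt4_general {d : ℕ} (φ : EuclideanSpace ℝ (Fin d) → ℝ)
    (Z : ℝ)
    (pb : EuclideanSpace ℝ (Fin d) → ℝ)
    (hpb : ∀ x, pb x = (1 / Z) * (2 * Real.exp (-φ (roundVec x)) /
      (1 + Real.exp (2 * ⟪x - roundVec x, gradient φ (roundVec x)⟫))))
    (z : Fin d → ℤ) :
    ∫ x in {x : EuclideanSpace ℝ (Fin d) |
        ∀ i, x i ∈ Set.Icc ((z i : ℝ) - 1/2) ((z i : ℝ) + 1/2)}, pb x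
      = Real.exp (-φ (WithLp.toLp 2 (fun i => (z i : ℝ)))) / Z := by
  set c : EuclideanSpace ℝ (Fin d) := WithLp.toLp 2 (fun i => (z i : ℝ))
  set B := {x : EuclideanSpace ℝ (Fin d) |
    ∀ i, x i ∈ Ioo ((z i : ℝ) - 1 / 2) ((z i : ℝ) + 1 / 2)}
  have hBm : MeasurableSet B := EuclideanSpace.measurableSet_setOf_forall_mem_Ioo _ _
  have hBvol : volume B = 1 := by
    rw [EuclideanSpace.volume_setOf_forall_mem_Ioo]
    norm_num
  have hpb_eq :
      EqOn pb (fun x => 2 * exp (-φ c) / Z * sigmoid ⟪x - c, (-2 : ℝ) • gradient φ c⟫) B := by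
    intro x hx
    rw [hpb, roundVec_eq_of_forall_mem_Ico (fun i => Ioo_subset_Ico_self (hx i))]
    simp only [sigmoid_def, inner_smul_right, neg_mul, neg_neg]
    ring
  calc _ = ∫ x in B, pb x :=
        setIntegral_congr_set (EuclideanSpace.setOf_forall_mem_Icc_ae_eq_Ioo _ _)
    _ = 2 * exp (-φ c) / Z * (volume.real B / 2) := by
      rw [setIntegral_congr_fun hBm hpb_eq, integral_const_mul,
        setIntegral_sigmoid_inner_sub_eq_half c _ hBm
          (EuclideanSpace.preimage_sub_setOf_forall_mem_Ioo c _) (by simp [hBvol])]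
    _ = _ := by
      rw [measureReal_def, hBvol, ENNReal.toReal_one]
      ring

/-- Rounding a sample from `π̄` gives a sample from `P_{ℤ^d}`: for every `z ∈ ℤ^d`, the
integral of `π̄(x) = (1/Z)·2e^{−φ([x])}/(1 + exp(2⟨x−[x], ∇φ([x])⟩))` over the unit
hypercube `z + [−1/2, 1/2]^d` equals `e^{−φ(z)}/Z`. -/
theorem stmt4 {d : ℕ} (hd : 1 ≤ d) (φ : EuclideanSpace ℝ (Fin d) → ℝ)
    (hdiff : Differentiable ℝ φ)
    (Z : ℝ)
    (hZ : Z = ∑' z : Fin d → ℤ, Real.exp (-φ (WithLp.toLp 2 (fun i => (z i : ℝ)))))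
    (hZpos : 0 < Z)
    (pb : EuclideanSpace ℝ (Fin d) → ℝ)
    (hpb : ∀ x, pb x = (1 / Z) * (2 * Real.exp (-φ (roundVec x)) /
      (1 + Real.exp (2 * ⟪x - roundVec x, gradient φ (roundVec x)⟫))))
    (z : Fin d → ℤ) :
    ∫ x in {x : EuclideanSpace ℝ (Fin d) |
        ∀ i, x i ∈ Set.Icc ((z i : ℝ) - 1/2) ((z i : ℝ) + 1/2)}, pb x
      = Real.exp (-φ (WithLp.toLp 2 (fun i => (z i : ℝ)))) / Z :=
  stmt4_general φ Z pb hpb z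
end

section
/- Let φ: ℝ^d → ℝ be differentiable, let Z = ∑_{z∈ℤ^d} e^{−φ(z)} be finite and positive, and define π̄(x) = (1/Z) · 2e^{−φ([x])} / (1 + exp(2⟨x − [x], ∇φ([x])⟩)), where [x] is the coordinate-wise rounding of x. Then π̄ is a probability density function: ∫_{ℝ^d} π̄(x) dx = 1. -/
open Real MeasureTheory
open scoped RealInnerProductSpace

/-!
On the cell of points rounding to a lattice point `z`, the density is `e^{-φ(z)}/Z` times
`2 / (1 + e^{2⟪u, g⟫})` with `u = x - z` and `g = ∇φ(z)`. Since `t ↦ 2 / (1 + e^t)` and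
`t ↦ 2 / (1 + e^{-t})` add up to `2`, the reflection `u ↦ -u` of the (almost everywhere
symmetric) unit cell shows that the second factor integrates to the volume of the cell, `1`.
Summing over the cells leaves `∑ e^{-φ(z)} / Z = 1`.
-/

open Set

lemma two_div_one_add_exp_add_two_div_one_add_exp_neg (t : ℝ) :
    2 / (1 + exp t) + 2 / (1 + exp (-t)) = 2 := by
  rw [exp_neg]
  field_simp
  ring

lemma lintegral_eq_tsum_setLIntegral_preimage_singleton {α β : Type*} [MeasurableSpace α]
    [MeasurableSpace β] [Countable β] [MeasurableSingletonClass β] {μ : Measure α}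
    {f : α → β} (hf : Measurable f) (g : α → ENNReal) :
    ∫⁻ x, g x ∂μ = ∑' b, ∫⁻ x in f ⁻¹' {b}, g x ∂μ := by
  rw [← lintegral_iUnion (fun b => hf (measurableSet_singleton b)) (pairwise_disjoint_fiber f),
    ← preimage_iUnion, iUnion_of_singleton, preimage_univ, setLIntegral_univ]

theorem setLIntegral_two_div_one_add_exp_of_odd {E : Type*} [MeasurableSpace E] [AddGroup E]
    [MeasurableNeg E] {μ : Measure E} [μ.IsNegInvariant] {s : Set E} (hs : -s =ᵐ[μ] s)
    {h : E → ℝ} (hh : Measurable h) (hodd : ∀ u, h (-u) = -h u) :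
    ∫⁻ u in s, ENNReal.ofReal (2 / (1 + exp (h u))) ∂μ = μ s := by
  set F : E → ENNReal := fun u => ENNReal.ofReal (2 / (1 + exp (h u))) with hF_def
  have hF : Measurable F := by fun_prop
  have hreflect : ∫⁻ u in s, F (-u) ∂μ = ∫⁻ u in s, F u ∂μ := by
    rw [← setLIntegral_congr hs]
    exact (Measure.measurePreserving_neg μ).setLIntegral_comp_preimage_emb
      (MeasurableEquiv.neg E).measurableEmbedding F s
  have hpair : ∀ u, F u + F (-u) = 2 := fun u => by
    simp only [hF_def, hodd]
    rw [← ENNReal.ofReal_add (by positivity) (by positivity),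
      two_div_one_add_exp_add_two_div_one_add_exp_neg, ENNReal.ofReal_ofNat]
  have htwice : 2 * ∫⁻ u in s, F u ∂μ = 2 * μ s :=
    calc 2 * ∫⁻ u in s, F u ∂μ = ∫⁻ u in s, F u ∂μ + ∫⁻ u in s, F (-u) ∂μ := by
          rw [hreflect, two_mul]
      _ = ∫⁻ u in s, (F u + F (-u)) ∂μ := (lintegral_add_left hF _).symm
      _ = 2 * μ s := by simp only [hpair, setLIntegral_const]
  exact (ENNReal.mul_right_inj two_ne_zero ENNReal.ofNat_ne_top).1 htwice

section Rounding

variable {d : ℕ}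

def latticePoint (z : Fin d → ℤ) : EuclideanSpace ℝ (Fin d) := WithLp.toLp 2 fun i => (z i : ℝ)

noncomputable def roundInt (x : EuclideanSpace ℝ (Fin d)) : Fin d → ℤ := fun i => round (x i)

lemma roundVec_eq_latticePoint_roundInt (x : EuclideanSpace ℝ (Fin d)) :
    roundVec x = latticePoint (roundInt x) := rfl

variable (d) in
def centeredCube : Set (EuclideanSpace ℝ (Fin d)) :=
  WithLp.ofLp ⁻¹' univ.pi fun _ => Ico (-(1 / 2)) (1 / 2)

lemma measurableSet_centeredCube : MeasurableSet (centeredCube d) :=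
  (WithLp.measurable_ofLp 2 _) (MeasurableSet.univ_pi fun _ => measurableSet_Ico)

lemma volume_centeredCube : volume (centeredCube d) = 1 := by
  rw [centeredCube, (PiLp.volume_preserving_ofLp _).measure_preimage
    (MeasurableSet.univ_pi fun _ => measurableSet_Ico).nullMeasurableSet, Real.volume_pi_Ico]
  norm_num

lemma neg_centeredCube_ae_eq : -centeredCube d =ᵐ[volume] centeredCube d := by
  have hneg : -centeredCube d = WithLp.ofLp ⁻¹' univ.pi fun _ => Ioc (-(1 / 2)) (1 / 2) := by
    ext x
    simp only [centeredCube, mem_neg, mem_preimage, mem_univ_pi, mem_Ico, mem_Ioc]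
    refine forall_congr' fun i => ?_
    simp only [WithLp.ofLp_neg, Pi.neg_apply]
    constructor <;> rintro ⟨h₁, h₂⟩ <;> constructor <;> linarith
  rw [hneg]
  exact (PiLp.volume_preserving_ofLp _).quasiMeasurePreserving.preimage_ae_eq
    (Measure.univ_pi_Ioc_ae_eq_Icc.trans Measure.univ_pi_Ico_ae_eq_Icc.symm)

lemma roundInt_preimage_singleton (z : Fin d → ℤ) :
    roundInt ⁻¹' {z} = (· - latticePoint z) ⁻¹' centeredCube d := by
  ext x
  simp only [mem_preimage, mem_singleton_iff, centeredCube, mem_univ_pi, funext_iff, roundInt,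
    round_eq_iff, mem_Ico, latticePoint]
  refine forall_congr' fun i => ?_
  simp only [WithLp.ofLp_sub, Pi.sub_apply]
  constructor <;> rintro ⟨h₁, h₂⟩ <;> constructor <;> linarith

lemma measurable_roundInt : Measurable (roundInt (d := d)) :=
  measurable_to_countable' fun z => by
    rw [roundInt_preimage_singleton]
    exact measurableSet_centeredCube.preimage (measurable_id.sub_const _)

lemma setLIntegral_preimage_roundInt (z : Fin d → ℤ) (g : EuclideanSpace ℝ (Fin d)) :
    ∫⁻ x in roundInt ⁻¹' {z}, ENNReal.ofReal (2 / (1 + exp (2 * ⟪x - latticePoint z, g⟫))) =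
      1 := by
  have htranslate := MeasurePreserving.setLIntegral_comp_preimage_emb
    (measurePreserving_sub_right volume (latticePoint z))
    (MeasurableEquiv.subRight _).measurableEmbedding
    (fun u => ENNReal.ofReal (2 / (1 + exp (2 * ⟪u, g⟫)))) (centeredCube d)
  rw [roundInt_preimage_singleton, htranslate,
    setLIntegral_two_div_one_add_exp_of_odd neg_centeredCube_ae_eq (by fun_prop)
      (fun u => by rw [inner_neg_left, mul_neg]), volume_centeredCube]

variable (c : (Fin d → ℤ) → ℝ) (G : (Fin d → ℤ) → EuclideanSpace ℝ (Fin d))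

noncomputable def cellDensity (x : EuclideanSpace ℝ (Fin d)) : ℝ :=
  c (roundInt x) * (2 / (1 + exp (2 * ⟪x - latticePoint (roundInt x), G (roundInt x)⟫)))

lemma measurable_cellDensity : Measurable (cellDensity c G) :=
  (measurable_from_prod_countable_left (f := fun p : EuclideanSpace ℝ (Fin d) × (Fin d → ℤ) =>
    c p.2 * (2 / (1 + exp (2 * ⟪p.1 - latticePoint p.2, G p.2⟫)))) fun z => by fun_prop).comp
    (measurable_id.prodMk measurable_roundInt)

lemma lintegral_cellDensity :
    ∫⁻ x, ENNReal.ofReal (cellDensity c G x) = ∑' z, ENNReal.ofReal (c z) := by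
  rw [lintegral_eq_tsum_setLIntegral_preimage_singleton measurable_roundInt]
  refine tsum_congr fun z => ?_
  calc ∫⁻ x in roundInt ⁻¹' {z}, ENNReal.ofReal (cellDensity c G x)
      = ∫⁻ x in roundInt ⁻¹' {z}, ENNReal.ofReal (c z) *
          ENNReal.ofReal (2 / (1 + exp (2 * ⟪x - latticePoint z, G z⟫))) :=
        setLIntegral_congr_fun (measurable_roundInt (measurableSet_singleton z)) fun x hx => by
          rw [cellDensity, mem_singleton_iff.1 hx, ENNReal.ofReal_mul' (by positivity)]
    _ = ENNReal.ofReal (c z) := by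
        rw [lintegral_const_mul' _ _ ENNReal.ofReal_ne_top, setLIntegral_preimage_roundInt, mul_one]

end Rounding

theorem stmt5_general {d : ℕ} (φ : EuclideanSpace ℝ (Fin d) → ℝ)
    (Z : ℝ)
    (hZ : Z = ∑' z : Fin d → ℤ, Real.exp (-φ (WithLp.toLp 2 (fun i => (z i : ℝ)))))
    (hZpos : 0 < Z)
    (pb : EuclideanSpace ℝ (Fin d) → ℝ)
    (hpb : ∀ x, pb x = (1 / Z) * (2 * Real.exp (-φ (roundVec x)) /
      (1 + Real.exp (2 * ⟪x - roundVec x, gradient φ (roundVec x)⟫)))) :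
    ∫ x : EuclideanSpace ℝ (Fin d), pb x = 1 := by
  change Z = ∑' z, exp (-φ (latticePoint z)) at hZ
  have hsum : Summable fun z : Fin d → ℤ => exp (-φ (latticePoint z)) := by
    by_contra h
    rw [tsum_eq_zero_of_not_summable h] at hZ
    exact hZpos.ne' hZ
  set c : (Fin d → ℤ) → ℝ := fun z => 1 / Z * exp (-φ (latticePoint z))
  have hpb_eq : pb = cellDensity c fun z => gradient φ (latticePoint z) := funext fun x => by
    rw [hpb, cellDensity, roundVec_eq_latticePoint_roundInt]
    ring
  have hc : ∑' z, c z = 1 := by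
    rw [tsum_mul_left, ← hZ, one_div_mul_cancel hZpos.ne']
  rw [integral_eq_lintegral_of_nonneg_ae (ae_of_all _ fun x => by rw [hpb]; positivity)
      (hpb_eq ▸ measurable_cellDensity _ _).aestronglyMeasurable,
    hpb_eq, lintegral_cellDensity, ← ENNReal.ofReal_tsum_of_nonneg (fun z => by positivity)
      (hsum.mul_left _), hc, ENNReal.toReal_ofReal zero_le_one]

/-- The target density `π̄(x) = (1/Z)·2e^{−φ([x])}/(1 + exp(2⟨x−[x], ∇φ([x])⟩))` is a
probability density function: it integrates to 1 over `ℝ^d`. -/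
theorem stmt5 {d : ℕ} (hd : 1 ≤ d) (φ : EuclideanSpace ℝ (Fin d) → ℝ)
    (hdiff : Differentiable ℝ φ)
    (Z : ℝ)
    (hZ : Z = ∑' z : Fin d → ℤ, Real.exp (-φ (WithLp.toLp 2 (fun i => (z i : ℝ)))))
    (hZpos : 0 < Z)
    (pb : EuclideanSpace ℝ (Fin d) → ℝ)
    (hpb : ∀ x, pb x = (1 / Z) * (2 * Real.exp (-φ (roundVec x)) /
      (1 + Real.exp (2 * ⟪x - roundVec x, gradient φ (roundVec x)⟫)))) :
    ∫ x : EuclideanSpace ℝ (Fin d), pb x = 1 :=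
  stmt5_general φ Z hZ hZpos pb hpb
end

section
/- (Theorem 1, minorization implies uniform ergodicity) Let P be a Markov transition kernel on a measurable space X with invariant probability measure π̄ (i.e., ∫ P(x, B) π̄(dx) = π̄(B) for all measurable B). Suppose there exist δ > 0 and a probability measure ν on X such that P(x, B) ≥ δ ν(B) for every x ∈ X and every measurable B ⊆ X. Then for every x ∈ X and every integer t ≥ 0, ‖P^t(x,·) − π̄(·)‖_TV ≤ (1 − δ)^t, where P^t denotes the t-step transition kernel (the t-fold composition of P). -/
open MeasureTheory ProbabilityTheory
open scoped ENNReal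

/-- Total variation distance between two measures:
`‖μ − ν‖_TV = sup_B |μ(B) − ν(B)|`, the supremum over measurable sets `B`. -/
noncomputable def tvDist {X : Type*} [MeasurableSpace X] (μ ν : Measure X) : ℝ :=
  ⨆ B : {B : Set X // MeasurableSet B}, |(μ B.1).toReal - (ν B.1).toReal|

/-- The `t`-step transition kernel: `t`-fold composition of `P` with itself. -/
noncomputable def kIter {X : Type*} [MeasurableSpace X] (P : Kernel X X) : ℕ → Kernel X X
  | 0 => Kernel.id
  | (t + 1) => P ∘ₖ kIter P t

lemma kIter_isMarkov {X : Type*} [MeasurableSpace X] (P : Kernel X X) [IsMarkovKernel P]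
    (t : ℕ) : IsMarkovKernel (kIter P t) := by
  induction t with
  | zero => rw [kIter]; infer_instance
  | succ t ih => rw [kIter]; haveI := ih; infer_instance

/-- Key lemma: if `μ B ≤ ρ B + ε` for all measurable `B`, and `g` is measurable with values
in `[0, c]`, then `∫⁻ g ∂μ ≤ ∫⁻ g ∂ρ + c * ε`. -/
lemma key_lemma {X : Type*} [MeasurableSpace X] (μ ρ : Measure X)
    (g : X → ℝ≥0∞) (hg : Measurable g) (c : ℝ) (hc : 0 ≤ c)
    (hgc : ∀ y, g y ≤ ENNReal.ofReal c) (ε : ℝ≥0∞)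
    (h : ∀ B : Set X, MeasurableSet B → μ B ≤ ρ B + ε) :
    ∫⁻ y, g y ∂μ ≤ (∫⁻ y, g y ∂ρ) + ENNReal.ofReal c * ε := by
  set f : X → ℝ := fun y => (g y).toReal with hf_def
  have hf : Measurable f := hg.ennreal_toReal
  have hfg : ∀ y, ENNReal.ofReal (f y) = g y := fun y =>
    ENNReal.ofReal_toReal (lt_of_le_of_lt (hgc y) ENNReal.ofReal_lt_top).ne
  have layer : ∀ m : Measure X,
      ∫⁻ y, g y ∂m = ∫⁻ t in Set.Ioi (0:ℝ), m {a | t < f a} := by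
    intro m
    rw [← MeasureTheory.lintegral_eq_lintegral_meas_lt m
      (ae_of_all _ fun y => ENNReal.toReal_nonneg) hf.aemeasurable]
    exact lintegral_congr fun y => (hfg y).symm
  have hflec : ∀ y, f y ≤ c := fun y => by
    have := hgc y
    rw [← hfg y] at this
    exact (ENNReal.ofReal_le_ofReal_iff hc).mp this
  have hempty : ∀ t : ℝ, c ≤ t → {a | t < f a} = ∅ := by
    intro t ht
    ext a
    simp only [Set.mem_setOf_eq, Set.mem_empty_iff_false, iff_false, not_lt]
    exact (hflec a).trans ht
  rw [layer μ, layer ρ]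
  have step : ∫⁻ t in Set.Ioi (0:ℝ), μ {a | t < f a} ≤
      ∫⁻ t in Set.Ioi (0:ℝ), (ρ {a | t < f a}
        + Set.indicator (Set.Ioo 0 c) (fun _ => ε) t) := by
    apply lintegral_mono_ae
    rw [ae_restrict_iff' measurableSet_Ioi]
    apply ae_of_all
    intro t ht
    by_cases htc : t < c
    · have : Set.indicator (Set.Ioo 0 c) (fun _ => ε) t = ε := by
        rw [Set.indicator_of_mem (Set.mem_Ioo.mpr ⟨ht, htc⟩)]
      rw [this]
      exact h _ (measurableSet_lt measurable_const hf)
    · rw [hempty t (not_lt.mp htc)]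
      simp
  refine step.trans ?_
  rw [lintegral_add_right _ (by
    exact (measurable_const.indicator measurableSet_Ioo))]
  gcongr
  rw [lintegral_indicator measurableSet_Ioo, setLIntegral_const,
    Measure.restrict_apply measurableSet_Ioo]
  have : Set.Ioo (0:ℝ) c ∩ Set.Ioi 0 = Set.Ioo 0 c := by
    ext t; simp only [Set.mem_inter_iff, Set.mem_Ioo, Set.mem_Ioi]; tauto
  rw [this, Real.volume_Ioo, mul_comm]
  simp

/-- Theorem 1 (minorization implies uniform ergodicity): if a Markov kernel `P` with
invariant probability measure `π̄` satisfies `P(x, B) ≥ δ ν(B)` for all `x` and all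
measurable `B`, for some `δ > 0` and probability measure `ν`, then
`‖P^t(x,·) − π̄‖_TV ≤ (1 − δ)^t` for every `x` and every `t ≥ 0`. -/
theorem stmt6 {X : Type*} [MeasurableSpace X] (P : Kernel X X) [IsMarkovKernel P]
    (πb : Measure X) [IsProbabilityMeasure πb]
    (hinv : ∀ B : Set X, MeasurableSet B → ∫⁻ x, P x B ∂πb = πb B)
    (δ : ℝ) (hδ : 0 < δ)
    (ν : Measure X) [IsProbabilityMeasure ν]
    (hmin : ∀ (x : X) (B : Set X), MeasurableSet B → ENNReal.ofReal δ * ν B ≤ P x B)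
    (x : X) (t : ℕ) :
    tvDist (kIter P t x) πb ≤ (1 - δ) ^ t := by
  -- δ ≤ 1
  have hδ1 : δ ≤ 1 := by
    have h1 := hmin x Set.univ MeasurableSet.univ
    simp only [measure_univ, mul_one] at h1
    exact ENNReal.ofReal_le_one.mp h1
  have h1δ : (0:ℝ) ≤ 1 - δ := by linarith
  -- decomposition: P y B = δ ν B + g_B y, with g_B y ≤ 1 - δ
  have hg_le : ∀ (y : X) (B : Set X), MeasurableSet B →
      P y B - ENNReal.ofReal δ * ν B ≤ ENNReal.ofReal (1 - δ) := by
    intro y B hB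
    rw [tsub_le_iff_right]
    have hcompl : ENNReal.ofReal δ * ν Bᶜ ≤ P y Bᶜ := hmin y Bᶜ hB.compl
    have hPadd : P y B + P y Bᶜ = 1 := by
      rw [measure_add_measure_compl hB, measure_univ]
    have hνadd : ENNReal.ofReal δ * ν B + ENNReal.ofReal δ * ν Bᶜ = ENNReal.ofReal δ := by
      rw [← mul_add, measure_add_measure_compl hB, measure_univ, mul_one]
    have hsum : ENNReal.ofReal (1 - δ) + ENNReal.ofReal δ = 1 := by
      rw [← ENNReal.ofReal_add h1δ hδ.le]
      norm_num
    have hfin : ENNReal.ofReal δ * ν Bᶜ ≠ ⊤ :=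
      (ENNReal.mul_lt_top ENNReal.ofReal_lt_top (measure_lt_top ν Bᶜ)).ne
    rw [← ENNReal.add_le_add_iff_right hfin]
    calc P y B + ENNReal.ofReal δ * ν Bᶜ ≤ P y B + P y Bᶜ := by gcongr
      _ = 1 := hPadd
      _ = ENNReal.ofReal (1 - δ) + ENNReal.ofReal δ := hsum.symm
      _ = ENNReal.ofReal (1 - δ) + (ENNReal.ofReal δ * ν B + ENNReal.ofReal δ * ν Bᶜ) := by
          rw [hνadd]
      _ = ENNReal.ofReal (1 - δ) + ENNReal.ofReal δ * ν B + ENNReal.ofReal δ * ν Bᶜ := by ring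
  -- main induction
  have main : ∀ t : ℕ, ∀ B : Set X, MeasurableSet B →
      (kIter P t x) B ≤ πb B + ENNReal.ofReal ((1 - δ) ^ t) ∧
      πb B ≤ (kIter P t x) B + ENNReal.ofReal ((1 - δ) ^ t) := by
    intro t
    induction t with
    | zero =>
      intro B hB
      haveI := kIter_isMarkov P 0
      constructor
      · calc (kIter P 0 x) B ≤ 1 := prob_le_one
          _ = ENNReal.ofReal ((1 - δ) ^ 0) := by norm_num
          _ ≤ _ := le_add_self
      · calc πb B ≤ 1 := prob_le_one
          _ = ENNReal.ofReal ((1 - δ) ^ 0) := by norm_num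
          _ ≤ _ := le_add_self
    | succ t ih =>
      intro B hB
      haveI := kIter_isMarkov P t
      set μt := kIter P t x with hμt
      -- the residual function
      set g : X → ℝ≥0∞ := fun y => P y B - ENNReal.ofReal δ * ν B with hg_def
      have hg_meas : Measurable g := (P.measurable_coe hB).sub measurable_const
      have hg_dec : ∀ y, P y B = ENNReal.ofReal δ * ν B + g y := by
        intro y
        rw [hg_def, add_comm]
        exact (tsub_add_cancel_of_le (hmin y B hB)).symm
      have hint : ∀ m : Measure X, IsProbabilityMeasure m →
          ∫⁻ y, P y B ∂m = ENNReal.ofReal δ * ν B + ∫⁻ y, g y ∂m := by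
        intro m hm
        simp_rw [hg_dec]
        rw [lintegral_add_left measurable_const, lintegral_const, measure_univ, mul_one]
      have hstep : (kIter P (t+1) x) B = ENNReal.ofReal δ * ν B + ∫⁻ y, g y ∂μt := by
        show (P ∘ₖ kIter P t) x B = _
        rw [Kernel.comp_apply' _ _ _ hB]
        exact hint μt inferInstance
      have hπ : πb B = ENNReal.ofReal δ * ν B + ∫⁻ y, g y ∂πb := by
        rw [← hinv B hB]
        exact hint πb inferInstance
      have hofm : ENNReal.ofReal (1 - δ) * ENNReal.ofReal ((1 - δ) ^ t)
          = ENNReal.ofReal ((1 - δ) ^ (t+1)) := by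
        rw [← ENNReal.ofReal_mul h1δ, pow_succ, mul_comm]
      constructor
      · rw [hstep, hπ]
        have := key_lemma μt πb g hg_meas (1 - δ) h1δ (fun y => hg_le y B hB)
          (ENNReal.ofReal ((1 - δ) ^ t)) (fun B' hB' => (ih B' hB').1)
        calc ENNReal.ofReal δ * ν B + ∫⁻ y, g y ∂μt
            ≤ ENNReal.ofReal δ * ν B + ((∫⁻ y, g y ∂πb)
              + ENNReal.ofReal (1 - δ) * ENNReal.ofReal ((1 - δ) ^ t)) := by gcongr
          _ = ENNReal.ofReal δ * ν B + (∫⁻ y, g y ∂πb) + ENNReal.ofReal ((1 - δ) ^ (t+1)) := by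
              rw [hofm]; ring
      · rw [hstep, hπ]
        have := key_lemma πb μt g hg_meas (1 - δ) h1δ (fun y => hg_le y B hB)
          (ENNReal.ofReal ((1 - δ) ^ t)) (fun B' hB' => (ih B' hB').2)
        calc ENNReal.ofReal δ * ν B + ∫⁻ y, g y ∂πb
            ≤ ENNReal.ofReal δ * ν B + ((∫⁻ y, g y ∂μt)
              + ENNReal.ofReal (1 - δ) * ENNReal.ofReal ((1 - δ) ^ t)) := by gcongr
          _ = ENNReal.ofReal δ * ν B + (∫⁻ y, g y ∂μt) + ENNReal.ofReal ((1 - δ) ^ (t+1)) := by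
              rw [hofm]; ring
  -- conclude
  haveI := kIter_isMarkov P t
  rw [tvDist]
  apply Real.iSup_le _ (pow_nonneg h1δ t)
  rintro ⟨B, hB⟩
  obtain ⟨h1, h2⟩ := main t B hB
  have hfin1 : (kIter P t x) B ≠ ⊤ := (measure_lt_top _ _).ne
  have hfin2 : πb B ≠ ⊤ := (measure_lt_top _ _).ne
  rw [abs_le]
  have e1 : ((kIter P t x) B).toReal ≤ (πb B).toReal + (1 - δ) ^ t := by
    have := ENNReal.toReal_mono (by finiteness) h1
    rwa [ENNReal.toReal_add hfin2 ENNReal.ofReal_ne_top,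
      ENNReal.toReal_ofReal (pow_nonneg h1δ t)] at this
  have e2 : (πb B).toReal ≤ ((kIter P t x) B).toReal + (1 - δ) ^ t := by
    have := ENNReal.toReal_mono (by finiteness) h2
    rwa [ENNReal.toReal_add hfin1 ENNReal.ofReal_ne_top,
      ENNReal.toReal_ofReal (pow_nonneg h1δ t)] at this
  constructor <;> linarith
end

section
/- (Minorization of the independent Metropolis–Hastings kernel) Let π and π̄ be everywhere-positive probability density functions on ℝ^d, and suppose there exists δ > 0 such that π(x)/π̄(x) ≥ δ for all x ∈ ℝ^d. Define the independent Metropolis–Hastings kernel P̄ by P̄(x, A) = ∫_A min(1, π̄(y)π(x)/(π̄(x)π(y))) π(y) dy + 1_A(x) · (1 − ∫_{ℝ^d} min(1, π̄(z)π(x)/(π̄(x)π(z))) π(z) dz). Then for every x ∈ ℝ^d and every measurable A ⊆ ℝ^d, P̄(x, A) ≥ δ ∫_A π̄(y) dy. -/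
/-!
Write `a(x, y) = min 1 (π̄(y)π(x) / (π̄(x)π(y)))` for the acceptance probability. The accepted
part `a(x, y) π(y)` equals `min (π(y)) (π̄(y) · π(x)/π̄(x))`, and both entries of the minimum are
at least `δ π̄(y)` by the ratio bound at `y` and at `x` respectively. Integrating over `A` bounds
the accepted part of `P̄(x, A)` below by `δ ∫_A π̄`, while the rejection term is nonnegative
because `a ≤ 1` makes the acceptance probability `∫ a(x, z) π(z) dz` at most `∫ π = 1`.
-/

open MeasureTheory

namespace IndependentMetropolisHastings

variable {α : Type*}

/-- The sub-probability density `y ↦ a(x, y) π(y)` of accepted moves from `x`, with `p = π` the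
proposal and `pb = π̄` the target density. -/
noncomputable def acceptedDensity (p pb : α → ℝ) (x y : α) : ℝ :=
  min 1 (pb y * p x / (pb x * p y)) * p y

variable {p pb : α → ℝ}

lemma acceptedDensity_nonneg (hp : ∀ y, 0 ≤ p y) (hpb : ∀ y, 0 ≤ pb y) (x y : α) :
    0 ≤ acceptedDensity p pb x y := by
  have := hp x; have := hp y; have := hpb x; have := hpb y
  unfold acceptedDensity
  positivity

lemma acceptedDensity_le (hp : ∀ y, 0 ≤ p y) (x y : α) : acceptedDensity p pb x y ≤ p y :=
  mul_le_of_le_one_left (hp y) (min_le_left _ _)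

lemma acceptedDensity_eq_min {x y : α} (hpy : 0 < p y) :
    acceptedDensity p pb x y = min (p y) (pb y * (p x / pb x)) := by
  rw [acceptedDensity, min_mul_of_nonneg _ _ hpy.le, one_mul]
  congr 1
  field_simp

lemma mul_le_acceptedDensity {δ : ℝ} (hp : ∀ y, 0 < p y) (hpb : ∀ y, 0 < pb y)
    (hratio : ∀ y, δ ≤ p y / pb y) (x y : α) : δ * pb y ≤ acceptedDensity p pb x y := by
  rw [acceptedDensity_eq_min (hp y)]
  refine le_min ?_ ?_
  · exact (le_div_iff₀ (hpb y)).mp (hratio y)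
  · rw [mul_comm]
    exact mul_le_mul_of_nonneg_left (hratio x) (hpb y).le

variable [MeasurableSpace α]

lemma measurable_acceptedDensity (hp : Measurable p) (hpb : Measurable pb) (x : α) :
    Measurable (acceptedDensity p pb x) := by
  unfold acceptedDensity
  fun_prop

variable {μ : Measure α}

lemma integrable_acceptedDensity (hp : Integrable p μ) (hpm : Measurable p) (hpbm : Measurable pb)
    (hp₀ : ∀ y, 0 ≤ p y) (hpb₀ : ∀ y, 0 ≤ pb y) (x : α) :
    Integrable (acceptedDensity p pb x) μ :=
  hp.mono' (measurable_acceptedDensity hpm hpbm x).aestronglyMeasurable <|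
    .of_forall fun y => by
      rw [Real.norm_of_nonneg (acceptedDensity_nonneg hp₀ hpb₀ x y)]
      exact acceptedDensity_le hp₀ x y

end IndependentMetropolisHastings

open IndependentMetropolisHastings in
theorem stmt7_general {d : ℕ} (p pb : EuclideanSpace ℝ (Fin d) → ℝ)
    (hpmeas : Measurable p) (hpbmeas : Measurable pb)
    (hppos : ∀ x, 0 < p x) (hpbpos : ∀ x, 0 < pb x)
    (hpint : ∫ x : EuclideanSpace ℝ (Fin d), p x = 1)
    (δ : ℝ) (hδ : 0 < δ) (hratio : ∀ x, δ ≤ p x / pb x)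
    (x : EuclideanSpace ℝ (Fin d)) (A : Set (EuclideanSpace ℝ (Fin d))) :
    (∫ y in A, min 1 (pb y * p x / (pb x * p y)) * p y) +
      A.indicator (fun _ => (1 : ℝ)) x *
        (1 - ∫ z : EuclideanSpace ℝ (Fin d), min 1 (pb z * p x / (pb x * p z)) * p z)
      ≥ δ * ∫ y in A, pb y := by
  have hp₀ : ∀ y, 0 ≤ p y := fun y => (hppos y).le
  have hpb₀ : ∀ y, 0 ≤ pb y := fun y => (hpbpos y).le
  have hp : Integrable p := .of_integral_ne_zero (by simp [hpint])
  have hacc := integrable_acceptedDensity hp hpmeas hpbmeas hp₀ hpb₀ x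
  change δ * _ ≤ (∫ y in A, acceptedDensity p pb x y) +
    A.indicator 1 x * (1 - ∫ z, acceptedDensity p pb x z)
  have haccepted : δ * ∫ y in A, pb y ≤ ∫ y in A, acceptedDensity p pb x y := by
    rw [← integral_const_mul]
    exact integral_mono_of_nonneg (.of_forall fun y => by have := hpb₀ y; positivity)
      hacc.integrableOn (.of_forall (mul_le_acceptedDensity hppos hpbpos hratio x))
  have hrejected : 0 ≤ A.indicator 1 x * (1 - ∫ z, acceptedDensity p pb x z) := by
    have := integral_mono hacc hp (acceptedDensity_le hp₀ x)
    exact mul_nonneg (Set.indicator_nonneg (fun _ _ => zero_le_one) x) (by linarith)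
  linarith

/-- Minorization of the independent Metropolis–Hastings kernel: if `π` and `π̄` are
everywhere-positive probability densities on `ℝ^d` with `π(x)/π̄(x) ≥ δ > 0` for all `x`,
then the IMH kernel
`P̄(x, A) = ∫_A min(1, π̄(y)π(x)/(π̄(x)π(y))) π(y) dy
          + 1_A(x)·(1 − ∫ min(1, π̄(z)π(x)/(π̄(x)π(z))) π(z) dz)`
satisfies `P̄(x, A) ≥ δ ∫_A π̄(y) dy` for every `x` and every measurable `A`. -/
theorem stmt7 {d : ℕ} (hd : 1 ≤ d) (p pb : EuclideanSpace ℝ (Fin d) → ℝ)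
    (hpmeas : Measurable p) (hpbmeas : Measurable pb)
    (hppos : ∀ x, 0 < p x) (hpbpos : ∀ x, 0 < pb x)
    (hpint : ∫ x : EuclideanSpace ℝ (Fin d), p x = 1)
    (hpbint : ∫ x : EuclideanSpace ℝ (Fin d), pb x = 1)
    (δ : ℝ) (hδ : 0 < δ) (hratio : ∀ x, δ ≤ p x / pb x)
    (x : EuclideanSpace ℝ (Fin d)) (A : Set (EuclideanSpace ℝ (Fin d)))
    (hA : MeasurableSet A) :
    (∫ y in A, min 1 (pb y * p x / (pb x * p y)) * p y) +
      A.indicator (fun _ => (1 : ℝ)) x *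
        (1 - ∫ z : EuclideanSpace ℝ (Fin d), min 1 (pb z * p x / (pb x * p z)) * p z)
      ≥ δ * ∫ y in A, pb y :=
  stmt7_general p pb hpmeas hpbmeas hppos hpbpos hpint δ hδ hratio x A
end

section
/- (Stationary distribution of the inexact IMHR chain) Let π and π̄ be everywhere-positive probability density functions on ℝ^d, and let q be a probability measure on ℝ^d. Define the kernel P̄(x, A) = ∫_A min(1, π̄(y)π(x)/(π̄(x)π(y))) q(dy) + 1_A(x) · (1 − ∫_{ℝ^d} min(1, π̄(z)π(x)/(π̄(x)π(z))) q(dz)). Assume C = ∫_{ℝ^d} (π̄(x)/π(x)) q(dx) satisfies 0 < C < ∞, and define the probability measure ν by ν(A) = (1/C) ∫_A (π̄(x)/π(x)) q(dx). Then ν is a stationary distribution of P̄: for every measurable A ⊆ ℝ^d, ∫_{ℝ^d} P̄(x, A) ν(dx) = ν(A). -/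
open Real MeasureTheory ProbabilityTheory

/-- Stationary distribution of the inexact IMHR chain: let `π`, `π̄` be everywhere-positive
probability densities on `ℝ^d`, let `q` be a probability measure, and let `P̄` be the kernel
`P̄(x, A) = ∫_A min(1, π̄(y)π(x)/(π̄(x)π(y))) q(dy)
          + 1_A(x)·(1 − ∫ min(1, π̄(z)π(x)/(π̄(x)π(z))) q(dz))`.
If `C = ∫ (π̄/π) dq ∈ (0, ∞)`, then the probability measure
`ν(A) = (1/C)∫_A (π̄/π) dq` is stationary for `P̄`: `∫ P̄(x, A) ν(dx) = ν(A)` for every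
measurable `A`. -/
theorem stmt9 {d : ℕ} (hd : 1 ≤ d) (p pb : EuclideanSpace ℝ (Fin d) → ℝ)
    (hpmeas : Measurable p) (hpbmeas : Measurable pb)
    (hppos : ∀ x, 0 < p x) (hpbpos : ∀ x, 0 < pb x)
    (hpint : ∫ x : EuclideanSpace ℝ (Fin d), p x = 1)
    (hpbint : ∫ x : EuclideanSpace ℝ (Fin d), pb x = 1)
    (q : Measure (EuclideanSpace ℝ (Fin d))) [IsProbabilityMeasure q]
    (P : Kernel (EuclideanSpace ℝ (Fin d)) (EuclideanSpace ℝ (Fin d)))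
    [IsMarkovKernel P]
    (hP : ∀ (x : EuclideanSpace ℝ (Fin d)) (A : Set (EuclideanSpace ℝ (Fin d))),
      MeasurableSet A →
      (P x A).toReal =
        (∫ y in A, min 1 (pb y * p x / (pb x * p y)) ∂q) +
          A.indicator (fun _ => (1 : ℝ)) x *
            (1 - ∫ z, min 1 (pb z * p x / (pb x * p z)) ∂q))
    (hint : Integrable (fun x => pb x / p x) q)
    (C : ℝ) (hC : C = ∫ x, pb x / p x ∂q) (hCpos : 0 < C)
    (ν : Measure (EuclideanSpace ℝ (Fin d)))
    (hν : ν = (ENNReal.ofReal C)⁻¹ •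
      q.withDensity (fun x => ENNReal.ofReal (pb x / p x))) :
    ∀ A : Set (EuclideanSpace ℝ (Fin d)), MeasurableSet A →
      ∫⁻ x, P x A ∂ν = ν A := by
  intro A hA
  set w : EuclideanSpace ℝ (Fin d) → ℝ := fun x => pb x / p x with hw
  have hwmeas : Measurable w := hpbmeas.div hpmeas
  have hwpos : ∀ x, 0 < w x := fun x => div_pos (hpbpos x) (hppos x)
  have hratio : ∀ x y, pb y * p x / (pb x * p y) = w y / w x := by
    intro x y
    rw [hw]
    field_simp
  set f : EuclideanSpace ℝ (Fin d) → ℝ := fun x => (P x A).toReal with hf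
  have hfmeas : Measurable f := (P.measurable_coe hA).ennreal_toReal
  have hf0 : ∀ x, 0 ≤ f x := fun x => ENNReal.toReal_nonneg
  have hf1 : ∀ x, f x ≤ 1 := by
    intro x
    have := ENNReal.toReal_mono (by simp) (prob_le_one (μ := P x) (s := A))
    simpa using this
  have hmin_int : ∀ x, Integrable (fun y => min (w x) (w y)) q := by
    intro x
    refine hint.mono ((measurable_const.min hwmeas).aestronglyMeasurable) ?_
    refine Filter.Eventually.of_forall fun y => ?_
    rw [Real.norm_eq_abs, Real.norm_eq_abs,
      abs_of_nonneg (le_min (hwpos x).le (hwpos y).le), abs_of_nonneg (hwpos y).le]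
    exact min_le_right _ _
  set G : EuclideanSpace ℝ (Fin d) → ℝ := fun x => ∫ z, min (w x) (w z) ∂q with hG
  have hGsm : StronglyMeasurable G := by
    have h : StronglyMeasurable (fun pr : EuclideanSpace ℝ (Fin d) × EuclideanSpace ℝ (Fin d) =>
        min (w pr.1) (w pr.2)) :=
      ((hwmeas.comp measurable_fst).min (hwmeas.comp measurable_snd)).stronglyMeasurable
    exact h.integral_prod_right'
  have hGnonneg : ∀ x, 0 ≤ G x :=
    fun x => integral_nonneg (fun z => le_min (hwpos x).le (hwpos z).le)
  have hGle : ∀ x, G x ≤ C := by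
    intro x
    rw [hC]
    exact integral_mono (hmin_int x) hint (fun z => min_le_right _ _)
  have hGint : Integrable G q := by
    refine Integrable.mono' (integrable_const C) hGsm.aestronglyMeasurable ?_
    refine Filter.Eventually.of_forall fun x => ?_
    rw [Real.norm_eq_abs, abs_of_nonneg (hGnonneg x)]
    exact hGle x
  have hkey : ∀ x y, w x * min 1 (pb y * p x / (pb x * p y)) = min (w x) (w y) := by
    intro x y
    have hc : w x * (w y / w x) = w y := by
      rw [mul_div_assoc']
      exact mul_div_cancel_left₀ _ (hwpos x).ne'
    rw [hratio, mul_min_of_nonneg _ _ (hwpos x).le, mul_one, hc]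
  set F1 : EuclideanSpace ℝ (Fin d) → ℝ := fun x => ∫ y in A, min (w x) (w y) ∂q with hF1
  -- Product-space integrability for Fubini
  have hgprod : Integrable (fun pr : EuclideanSpace ℝ (Fin d) × EuclideanSpace ℝ (Fin d) =>
      w pr.2) (q.prod q) := by
    have hm : AEStronglyMeasurable
        (fun pr : EuclideanSpace ℝ (Fin d) × EuclideanSpace ℝ (Fin d) => w pr.2) (q.prod q) :=
      (hwmeas.comp measurable_snd).aestronglyMeasurable
    rw [integrable_prod_iff hm]
    refine ⟨Filter.Eventually.of_forall fun x => hint, ?_⟩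
    exact (integrable_const (∫ y, ‖w y‖ ∂q)).congr (Filter.Eventually.of_forall fun x => rfl)
  have hHmeas : Measurable (fun pr : EuclideanSpace ℝ (Fin d) × EuclideanSpace ℝ (Fin d) =>
      A.indicator (fun _ => (1:ℝ)) pr.2 * min (w pr.1) (w pr.2)) := by
    exact ((measurable_one.indicator hA).comp measurable_snd).mul
      ((hwmeas.comp measurable_fst).min (hwmeas.comp measurable_snd))
  have hHint : Integrable (fun pr : EuclideanSpace ℝ (Fin d) × EuclideanSpace ℝ (Fin d) =>
      A.indicator (fun _ => (1:ℝ)) pr.2 * min (w pr.1) (w pr.2)) (q.prod q) := by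
    refine hgprod.mono hHmeas.aestronglyMeasurable ?_
    refine Filter.Eventually.of_forall fun pr => ?_
    rw [Real.norm_eq_abs, Real.norm_eq_abs, abs_mul, abs_of_nonneg (hwpos pr.2).le]
    have h1 : |A.indicator (fun _ => (1:ℝ)) pr.2| ≤ 1 := by
      by_cases h : pr.2 ∈ A <;> simp [h]
    have h2 : |min (w pr.1) (w pr.2)| ≤ w pr.2 := by
      rw [abs_of_nonneg (le_min (hwpos pr.1).le (hwpos pr.2).le)]
      exact min_le_right _ _
    calc |A.indicator (fun _ => (1:ℝ)) pr.2| * |min (w pr.1) (w pr.2)|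
        ≤ 1 * |min (w pr.1) (w pr.2)| := by
          exact mul_le_mul_of_nonneg_right h1 (abs_nonneg _)
      _ ≤ w pr.2 := by rw [one_mul]; exact h2
  have hind : ∀ (g : EuclideanSpace ℝ (Fin d) → ℝ) (y),
      A.indicator (fun _ => (1:ℝ)) y * g y = A.indicator g y := by
    intro g y
    by_cases h : y ∈ A <;> simp [h]
  have h1 : ∀ x, F1 x = ∫ y, A.indicator (fun _ => (1:ℝ)) y * min (w x) (w y) ∂q := by
    intro x
    show (∫ y in A, min (w x) (w y) ∂q) = _
    rw [← integral_indicator hA]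
    exact integral_congr_ae (Filter.Eventually.of_forall fun y => (hind _ y).symm)
  have hswap : ∫ x, F1 x ∂q = ∫ x in A, G x ∂q := by
    have h2 := integral_integral_swap
      (f := fun x y => A.indicator (fun _ => (1:ℝ)) y * min (w x) (w y)) hHint
    calc ∫ x, F1 x ∂q
        = ∫ x, ∫ y, A.indicator (fun _ => (1:ℝ)) y * min (w x) (w y) ∂q ∂q := by
          exact integral_congr_ae (Filter.Eventually.of_forall h1)
      _ = ∫ y, ∫ x, A.indicator (fun _ => (1:ℝ)) y * min (w x) (w y) ∂q ∂q := h2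
      _ = ∫ y, A.indicator (fun _ => (1:ℝ)) y * G y ∂q := by
          refine integral_congr_ae (Filter.Eventually.of_forall fun y => ?_)
          show (∫ x, A.indicator (fun _ => (1:ℝ)) y * min (w x) (w y) ∂q) = _
          rw [integral_const_mul]
          congr 1
          show _ = (∫ z, min (w y) (w z) ∂q)
          exact integral_congr_ae (Filter.Eventually.of_forall fun x => min_comm _ _)
      _ = ∫ x in A, G x ∂q := by
          rw [← integral_indicator hA]
          exact integral_congr_ae (Filter.Eventually.of_forall fun y => hind G y)
  have hF1int : Integrable F1 q := by
    have h3 := hHint.integral_prod_left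
    refine h3.congr (Filter.Eventually.of_forall fun x => ?_)
    show (∫ y, A.indicator (fun _ => (1:ℝ)) y * min (w x) (w y) ∂q) = F1 x
    exact (h1 x).symm
  have hdecomp : ∀ x, w x * f x = F1 x + A.indicator (fun _ => (1:ℝ)) x * (w x - G x) := by
    intro x
    have e1 : w x * ∫ y in A, min 1 (pb y * p x / (pb x * p y)) ∂q = F1 x := by
      rw [← integral_const_mul]
      show _ = (∫ y in A, min (w x) (w y) ∂q)
      exact integral_congr_ae (Filter.Eventually.of_forall fun y => hkey x y)
    have e2 : w x * ∫ z, min 1 (pb z * p x / (pb x * p z)) ∂q = G x := by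
      rw [← integral_const_mul]
      show _ = (∫ z, min (w x) (w z) ∂q)
      exact integral_congr_ae (Filter.Eventually.of_forall fun z => hkey x z)
    have hfx : f x = (∫ y in A, min 1 (pb y * p x / (pb x * p y)) ∂q) +
        A.indicator (fun _ => (1 : ℝ)) x *
          (1 - ∫ z, min 1 (pb z * p x / (pb x * p z)) ∂q) := hP x A hA
    rw [hfx]
    calc w x * ((∫ y in A, min 1 (pb y * p x / (pb x * p y)) ∂q) +
          A.indicator (fun _ => (1 : ℝ)) x *
            (1 - ∫ z, min 1 (pb z * p x / (pb x * p z)) ∂q))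
        = (w x * ∫ y in A, min 1 (pb y * p x / (pb x * p y)) ∂q) +
          A.indicator (fun _ => (1 : ℝ)) x *
            (w x * 1 - w x * ∫ z, min 1 (pb z * p x / (pb x * p z)) ∂q) := by ring
      _ = F1 x + A.indicator (fun _ => (1:ℝ)) x * (w x - G x) := by
          rw [e1, e2, mul_one]
  have hwf_int : Integrable (fun x => w x * f x) q := by
    refine hint.mono ((hwmeas.mul hfmeas).aestronglyMeasurable) ?_
    refine Filter.Eventually.of_forall fun x => ?_
    rw [Real.norm_eq_abs, Real.norm_eq_abs, abs_of_nonneg (mul_nonneg (hwpos x).le (hf0 x)),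
      abs_of_nonneg (hwpos x).le]
    calc w x * f x ≤ w x * 1 := mul_le_mul_of_nonneg_left (hf1 x) (hwpos x).le
      _ = w x := mul_one _
  have hIndInt : Integrable (fun x => A.indicator (fun _ => (1:ℝ)) x * (w x - G x)) q := by
    refine ((hint.sub hGint).indicator hA).congr (Filter.Eventually.of_forall fun x => ?_)
    by_cases h : x ∈ A <;> simp [h]
  have hmain : ∫ x, w x * f x ∂q = ∫ x in A, w x ∂q := by
    calc ∫ x, w x * f x ∂q
        = ∫ x, (F1 x + A.indicator (fun _ => (1:ℝ)) x * (w x - G x)) ∂q :=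
          integral_congr_ae (Filter.Eventually.of_forall hdecomp)
      _ = (∫ x, F1 x ∂q) + ∫ x, A.indicator (fun _ => (1:ℝ)) x * (w x - G x) ∂q :=
          integral_add hF1int hIndInt
      _ = (∫ x in A, G x ∂q) + ∫ x in A, (w x - G x) ∂q := by
          rw [hswap]
          congr 1
          rw [← integral_indicator hA]
          refine integral_congr_ae (Filter.Eventually.of_forall fun x => ?_)
          by_cases h : x ∈ A <;> simp [h]
      _ = (∫ x in A, G x ∂q) + ((∫ x in A, w x ∂q) - ∫ x in A, G x ∂q) := by
          rw [integral_sub hint.integrableOn hGint.integrableOn]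
      _ = ∫ x in A, w x ∂q := by ring
  -- now the ENNReal-level conclusion
  rw [hν, lintegral_smul_measure,
    lintegral_withDensity_eq_lintegral_mul q hwmeas.ennreal_ofReal (P.measurable_coe hA)]
  have hpt : ∀ x, ((fun x => ENNReal.ofReal (w x)) * fun x => P x A) x
      = ENNReal.ofReal (w x * f x) := by
    intro x
    simp only [Pi.mul_apply]
    rw [ENNReal.ofReal_mul (hwpos x).le, hf, ENNReal.ofReal_toReal (measure_ne_top _ _)]
  rw [lintegral_congr hpt,
    ← ofReal_integral_eq_lintegral_ofReal hwf_int
      (Filter.Eventually.of_forall fun x => mul_nonneg (hwpos x).le (hf0 x)),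
    hmain]
  rw [Measure.smul_apply, smul_eq_mul, withDensity_apply _ hA,
    ← ofReal_integral_eq_lintegral_ofReal hint.integrableOn
      (Filter.Eventually.of_forall fun x => (hwpos x).le)]
  rfl
end

section
/- (TVD between the perturbed stationary distribution and the target) Let π and π̄ be everywhere-positive probability density functions on ℝ^d with π(x)/π̄(x) ≥ δ for all x ∈ ℝ^d, where δ > 0. Let q be a probability measure on ℝ^d such that the measure μ_π with density π is absolutely continuous with respect to q, assume C = ∫_{ℝ^d} (π̄/π) dq satisfies 0 < C < ∞, and define ν(A) = (1/C) ∫_A (π̄/π) dq. Then ‖ν − μ_{π̄}‖_TV ≤ (1/δ)‖q − μ_π‖_TV + |C − 1|/(2Cδ), where μ_{π̄} is the probability measure with density π̄. -/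
open Real MeasureTheory

lemma tvDist_le_of_forall {X : Type*} [MeasurableSpace X] {μ ν : Measure X} {c : ℝ}
    (h : ∀ B : Set X, MeasurableSet B → |(μ B).toReal - (ν B).toReal| ≤ c) :
    tvDist μ ν ≤ c := by
  haveI : Nonempty {B : Set X // MeasurableSet B} := ⟨⟨∅, MeasurableSet.empty⟩⟩
  exact ciSup_le fun B => h B.1 B.2

lemma le_tvDist {X : Type*} [MeasurableSpace X] (μ ν : Measure X)
    [IsFiniteMeasure μ] [IsFiniteMeasure ν] {B : Set X} (hB : MeasurableSet B) :
    |(μ B).toReal - (ν B).toReal| ≤ tvDist μ ν := by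
  apply le_ciSup (f := fun B : {B : Set X // MeasurableSet B} =>
    |(μ B.1).toReal - (ν B.1).toReal|) ?_ ⟨B, hB⟩
  refine ⟨(μ Set.univ).toReal + (ν Set.univ).toReal, ?_⟩
  rintro x ⟨A, rfl⟩
  have h1 : (μ A.1).toReal ≤ (μ Set.univ).toReal :=
    ENNReal.toReal_mono (measure_ne_top _ _) (measure_mono (Set.subset_univ _))
  have h2 : (ν A.1).toReal ≤ (ν Set.univ).toReal :=
    ENNReal.toReal_mono (measure_ne_top _ _) (measure_mono (Set.subset_univ _))
  have h3 : (0:ℝ) ≤ (μ A.1).toReal := ENNReal.toReal_nonneg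
  have h4 : (0:ℝ) ≤ (ν A.1).toReal := ENNReal.toReal_nonneg
  rw [abs_le]; constructor <;> linarith

lemma abs_integral_sub_integral_le {X : Type*} [MeasurableSpace X] (μ1 μ2 : Measure X)
    [IsProbabilityMeasure μ1] [IsProbabilityMeasure μ2] {g : X → ℝ} (hg : Measurable g)
    (hnn : ∀ x, 0 ≤ g x) {M : ℝ} (hM : 0 < M) (hbd : ∀ x, g x ≤ M)
    (h1 : Integrable g μ1) (h2 : Integrable g μ2) :
    |∫ x, g x ∂μ1 - ∫ x, g x ∂μ2| ≤ M * tvDist μ1 μ2 := by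
  have e1 := h1.integral_eq_integral_Ioc_meas_le (ae_of_all _ hnn) (ae_of_all _ hbd)
  have e2 := h2.integral_eq_integral_Ioc_meas_le (ae_of_all _ hnn) (ae_of_all _ hbd)
  rw [e1, e2]
  have hanti : ∀ μ : Measure X, Antitone (fun t : ℝ => μ {a | t ≤ g a}) :=
    fun μ s t hst => measure_mono fun a ha => hst.trans ha
  have hmeas : ∀ (μ : Measure X), Measurable fun t : ℝ => (μ {a | t ≤ g a}).toReal := fun μ =>
    ((hanti μ).measurable).ennreal_toReal
  have hbd1 : ∀ (μ : Measure X) [IsProbabilityMeasure μ] (t : ℝ),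
      (μ {a | t ≤ g a}).toReal ≤ 1 := by
    intro μ _ t
    have := ENNReal.toReal_mono (ENNReal.one_ne_top) (prob_le_one (μ := μ) (s := {a | t ≤ g a}))
    simpa using this
  have hintt : ∀ (μ : Measure X) [IsProbabilityMeasure μ],
      IntegrableOn (fun t : ℝ => (μ {a | t ≤ g a}).toReal) (Set.Ioc 0 M) := by
    intro μ _
    apply (integrable_const (1:ℝ)).mono' ((hmeas μ).aestronglyMeasurable)
    apply ae_of_all
    intro t
    rw [Real.norm_eq_abs, abs_of_nonneg ENNReal.toReal_nonneg]
    exact hbd1 μ t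
  unfold Measure.real
  rw [← integral_sub (hintt μ1) (hintt μ2)]
  have hfin : volume (Set.Ioc (0:ℝ) M) < ⊤ := by simp
  have key := norm_setIntegral_le_of_norm_le_const (μ := volume) (C := tvDist μ1 μ2) hfin
    (f := fun t : ℝ => (μ1 {a | t ≤ g a}).toReal - (μ2 {a | t ≤ g a}).toReal)
    (fun t _ => by
      rw [Real.norm_eq_abs]
      exact le_tvDist μ1 μ2 (measurableSet_le measurable_const hg))
  rw [Real.norm_eq_abs] at key
  refine key.trans ?_
  unfold Measure.real
  rw [Real.volume_Ioc]
  have : (ENNReal.ofReal (M - 0)).toReal = M := by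
    rw [ENNReal.toReal_ofReal (by linarith)]; ring
  rw [this, mul_comm]
/-- TVD between the perturbed stationary distribution and the target: with
everywhere-positive probability densities `π`, `π̄` satisfying `π/π̄ ≥ δ > 0`, a probability
measure `q` with `μ_π ≪ q`, `C = ∫ (π̄/π) dq ∈ (0, ∞)` and
`ν(A) = (1/C)∫_A (π̄/π) dq`, one has
`‖ν − μ_{π̄}‖_TV ≤ (1/δ)‖q − μ_π‖_TV + |C − 1|/(2Cδ)`. -/
theorem stmt12 {d : ℕ} (hd : 1 ≤ d) (p pb : EuclideanSpace ℝ (Fin d) → ℝ)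
    (hpmeas : Measurable p) (hpbmeas : Measurable pb)
    (hppos : ∀ x, 0 < p x) (hpbpos : ∀ x, 0 < pb x)
    (hpint : ∫ x : EuclideanSpace ℝ (Fin d), p x = 1)
    (hpbint : ∫ x : EuclideanSpace ℝ (Fin d), pb x = 1)
    (δ : ℝ) (hδ : 0 < δ) (hratio : ∀ x, δ ≤ p x / pb x)
    (q : Measure (EuclideanSpace ℝ (Fin d))) [IsProbabilityMeasure q]
    (hac : (volume.withDensity (fun x => ENNReal.ofReal (p x))) ≪ q)
    (hint : Integrable (fun x => pb x / p x) q)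
    (C : ℝ) (hC : C = ∫ x, pb x / p x ∂q) (hCpos : 0 < C)
    (ν : Measure (EuclideanSpace ℝ (Fin d)))
    (hν : ν = (ENNReal.ofReal C)⁻¹ •
      q.withDensity (fun x => ENNReal.ofReal (pb x / p x))) :
    tvDist ν (volume.withDensity (fun x => ENNReal.ofReal (pb x))) ≤
      (1 / δ) * tvDist q (volume.withDensity (fun x => ENNReal.ofReal (p x))) +
        |C - 1| / (2 * C * δ) := by
  set f : EuclideanSpace ℝ (Fin d) → ℝ := fun x => pb x / p x with hf
  have hfmeas : Measurable f := hpbmeas.div hpmeas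
  have hfnn : ∀ x, 0 ≤ f x := fun x => div_nonneg (hpbpos x).le (hppos x).le
  have hfle : ∀ x, f x ≤ 1/δ := by
    intro x
    rw [hf]
    simp only
    rw [div_le_div_iff₀ (hppos x) hδ]
    have := (le_div_iff₀ (hpbpos x)).mp (hratio x)
    nlinarith
  have hδinv : (0:ℝ) < 1/δ := by positivity
  have hip : Integrable p := by
    by_contra h; rw [integral_undef h] at hpint; norm_num at hpint
  have hipb : Integrable pb := by
    by_contra h; rw [integral_undef h] at hpbint; norm_num at hpbint
  set μp := volume.withDensity (fun x => ENNReal.ofReal (p x)) with hμp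
  set μpb := volume.withDensity (fun x => ENNReal.ofReal (pb x)) with hμpb
  haveI : IsProbabilityMeasure μp := by
    constructor
    rw [hμp, withDensity_apply _ MeasurableSet.univ, Measure.restrict_univ,
      ← ofReal_integral_eq_lintegral_ofReal hip (ae_of_all _ fun x => (hppos x).le), hpint,
      ENNReal.ofReal_one]
  haveI : IsProbabilityMeasure μpb := by
    constructor
    rw [hμpb, withDensity_apply _ MeasurableSet.univ, Measure.restrict_univ,
      ← ofReal_integral_eq_lintegral_ofReal hipb (ae_of_all _ fun x => (hpbpos x).le), hpbint,
      ENNReal.ofReal_one]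
  have hμp' : μp = volume.withDensity (fun x => ((p x).toNNReal : ENNReal)) := rfl
  have hpnn_meas : Measurable (fun x => (p x).toNNReal) := hpmeas.real_toNNReal
  have hsmul : ∀ x, (p x).toNNReal • f x = pb x := by
    intro x
    rw [NNReal.smul_def, Real.coe_toNNReal _ (hppos x).le, hf, smul_eq_mul,
      mul_comm, div_mul_cancel₀ _ (hppos x).ne']
  have hifμp : Integrable f μp := by
    rw [hμp', integrable_withDensity_iff_integrable_smul hpnn_meas]
    refine hipb.congr ?_
    exact ae_of_all _ fun x => (hsmul x).symm
  have hbsetint : ∀ B : Set (EuclideanSpace ℝ (Fin d)), MeasurableSet B →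
      ∫ x in B, f x ∂μp = ∫ x in B, pb x := by
    intro B hB
    rw [hμp', restrict_withDensity hB, integral_withDensity_eq_integral_smul hpnn_meas]
    exact integral_congr_ae (ae_of_all _ fun x => hsmul x)
  have hμpbB : ∀ B : Set (EuclideanSpace ℝ (Fin d)), MeasurableSet B →
      (μpb B).toReal = ∫ x in B, pb x := by
    intro B hB
    rw [hμpb, withDensity_apply _ hB,
      ← ofReal_integral_eq_lintegral_ofReal hipb.integrableOn
        (ae_of_all _ fun x => (hpbpos x).le),
      ENNReal.toReal_ofReal (setIntegral_nonneg hB fun x _ => (hpbpos x).le)]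
  have hνB : ∀ B : Set (EuclideanSpace ℝ (Fin d)), MeasurableSet B →
      (ν B).toReal = C⁻¹ * ∫ x in B, f x ∂q := by
    intro B hB
    rw [hν]
    simp only [Measure.smul_apply, smul_eq_mul]
    rw [withDensity_apply _ hB,
      ← ofReal_integral_eq_lintegral_ofReal hint.integrableOn (ae_of_all _ fun x => hfnn x),
      ENNReal.toReal_mul, ENNReal.toReal_inv, ENNReal.toReal_ofReal hCpos.le,
      ENNReal.toReal_ofReal (setIntegral_nonneg hB fun x _ => hfnn x)]
  have hCle : C ≤ 1/δ := by
    rw [hC]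
    calc ∫ x, f x ∂q ≤ ∫ _x, (1/δ) ∂q := integral_mono hint (integrable_const _) hfle
    _ = 1/δ := by simp
  apply tvDist_le_of_forall
  intro B hB
  have hBc := hB.compl
  set T := tvDist q μp with hT
  set nB := ∫ x in B, f x ∂q with hnB
  set nBc := ∫ x in Bᶜ, f x ∂q with hnBc
  set pB := ∫ x in B, f x ∂μp with hpB
  set pBc := ∫ x in Bᶜ, f x ∂μp with hpBc
  have hsum1 : nB + nBc = C := by rw [hC, hnB, hnBc]; exact integral_add_compl hB hint
  have huniv : ∫ x, f x ∂μp = 1 := by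
    have h := hbsetint Set.univ MeasurableSet.univ
    rw [Measure.restrict_univ, Measure.restrict_univ] at h
    rw [h, hpbint]
  have hsum2 : pB + pBc = 1 := by
    rw [hpB, hpBc, integral_add_compl hB hifμp, huniv]
  have hnBnn : 0 ≤ nB := setIntegral_nonneg hB fun x _ => hfnn x
  have hnBcnn : 0 ≤ nBc := setIntegral_nonneg hBc fun x _ => hfnn x
  have hA : ∀ S : Set (EuclideanSpace ℝ (Fin d)), MeasurableSet S →
      |(∫ x in S, f x ∂q) - ∫ x in S, f x ∂μp| ≤ (1/δ) * T := by
    intro S hS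
    have hg : Measurable (S.indicator f) := hfmeas.indicator hS
    have h1 : Integrable (S.indicator f) q := hint.indicator hS
    have h2 : Integrable (S.indicator f) μp := hifμp.indicator hS
    have hnn : ∀ x, 0 ≤ S.indicator f x := fun x =>
      Set.indicator_nonneg (fun y _ => hfnn y) x
    have hbd : ∀ x, S.indicator f x ≤ 1/δ := fun x =>
      Set.indicator_apply_le' (fun _ => hfle x) (fun _ => hδinv.le)
    have key := abs_integral_sub_integral_le q μp hg hnn hδinv hbd h1 h2
    rwa [integral_indicator hS, integral_indicator hS] at key
  have hA1 := hA B hB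
  have hA2 := hA Bᶜ hBc
  rw [hνB B hB, hμpbB B hB, ← hbsetint B hB]
  have hTB : |C⁻¹*nB - C⁻¹*nBc| ≤ 1 := by
    have h1 : C⁻¹*nB + C⁻¹*nBc = 1 := by
      rw [← mul_add, hsum1, inv_mul_cancel₀ hCpos.ne']
    have h2 : 0 ≤ C⁻¹*nB := mul_nonneg (inv_nonneg.mpr hCpos.le) hnBnn
    have h3 : 0 ≤ C⁻¹*nBc := mul_nonneg (inv_nonneg.mpr hCpos.le) hnBcnn
    rw [abs_le]; constructor <;> linarith
  have key : 2*(C⁻¹*nB - pB) = ((nB - pB) - (nBc - pBc)) + (1 - C)*(C⁻¹*nB - C⁻¹*nBc) := by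
    have e3 : nBc = C - nB := by linarith
    have e4 : pBc = 1 - pB := by linarith
    rw [e3, e4]
    field_simp
    ring
  have h5 : |(1 - C)*(C⁻¹*nB - C⁻¹*nBc)| ≤ |C - 1| := by
    rw [abs_mul, abs_sub_comm 1 C]
    calc |C - 1| * |C⁻¹*nB - C⁻¹*nBc| ≤ |C - 1| * 1 :=
          mul_le_mul_of_nonneg_left hTB (abs_nonneg _)
      _ = |C - 1| := mul_one _
  have habs : |C⁻¹*nB - pB| ≤ (1/δ)*T + |C - 1|/2 := by
    have h6 : |2*(C⁻¹*nB - pB)| ≤ 2*((1/δ)*T) + |C - 1| := by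
      rw [key]
      calc |((nB - pB) - (nBc - pBc)) + (1 - C)*(C⁻¹*nB - C⁻¹*nBc)|
          ≤ |(nB - pB) - (nBc - pBc)| + |(1 - C)*(C⁻¹*nB - C⁻¹*nBc)| := abs_add_le _ _
        _ ≤ (|nB - pB| + |nBc - pBc|) + |C - 1| := add_le_add (abs_sub _ _) h5
        _ ≤ ((1/δ)*T + (1/δ)*T) + |C - 1| := by gcongr
        _ = 2*((1/δ)*T) + |C - 1| := by ring
    rw [abs_mul, abs_two] at h6
    linarith
  refine habs.trans ?_
  have hfinal : |C - 1|/2 ≤ |C - 1|/(2*C*δ) := by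
    apply div_le_div_of_nonneg_left (abs_nonneg _) (by positivity)
    have h1δ : (1/δ)*δ = 1 := by field_simp
    nlinarith
  linarith
end
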